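/- arXiv:1810.04209 — 3 statements merged into one kernel-verified Lean document; each statement's English description precedes it below -/
import Mathlib

section
/- Let (X,d) be a complete generalized metric space (d may take the value +∞). Assume Ω : X → X is strictly contractive with Lipschitz constant L < 1 (meaning d(Ωx,Ωy) ≤ L·d(x,y) for all x,y). If there exists a nonnegative integer k and x ∈ X with d(Ω^{k+1}x, Ω^k x) < ∞, then: (1) the sequence (Ω^n x) converges to some x*; (2) x* is the unique fixed point of Ω in the set X* = {y ∈ X : d(Ω^k x, y) < ∞}; (3) for every y ∈ X*, d(y, x*) ≤ (1/(1-L)) d(Ωy, y). -/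
open Filter Topology
open scoped ENNReal NNReal

/-!
Once `d` is packaged as an `EMetricSpace`, this is Banach's fixed point theorem in extended
metric spaces, applied from the starting point `Ωᵏ x`, which lies at finite distance from its
image. The set `X*` is the finite-distance component of `Ωᵏ x`: it contains the limit of the
iterates, and by the triangle inequality a second fixed point in it would lie at finite distance
from the first, so the contraction identifies them.
-/

namespace ContractingWith

variable {α : Type*} [EMetricSpace α] [CompleteSpace α] {K : ℝ≥0} {f : α → α}
  (hf : ContractingWith K f) {x : α} (hx : edist x (f x) ≠ ∞) {y : α}

theorem edist_efixedPoint_ne_top (hy : edist x y ≠ ∞) : edist y (efixedPoint f hf x hx) ≠ ∞ :=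
  ne_top_of_le_ne_top
    (ENNReal.add_ne_top.2 ⟨by rwa [edist_comm], (hf.edist_efixedPoint_lt_top hx).ne⟩)
    (edist_triangle y x _)

theorem eq_efixedPoint_of_edist_ne_top (hy : edist x y ≠ ∞) (hfy : Function.IsFixedPt f y) :
    y = efixedPoint f hf x hx :=
  (hf.eq_or_edist_eq_top_of_fixedPoints hfy (hf.efixedPoint_isFixedPt hx)).resolve_right
    (hf.edist_efixedPoint_ne_top hx hy)

theorem edist_efixedPoint_le_of_edist_ne_top (hy : edist x y ≠ ∞) :
    edist y (efixedPoint f hf x hx) ≤ edist y (f y) / (1 - K) :=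
  hf.edist_le_of_fixedPoint (hf.edist_efixedPoint_ne_top hx hy) (hf.efixedPoint_isFixedPt hx)

end ContractingWith

section OfDist

variable {X : Type*} (d : X → X → ℝ≥0∞) (h_eq : ∀ x y, d x y = 0 ↔ x = y)
  (h_symm : ∀ x y, d x y = d y x) (h_triangle : ∀ x y z, d x z ≤ d x y + d y z)

noncomputable abbrev EMetricSpace.ofDist : EMetricSpace X where
  edist := d
  edist_self x := (h_eq x x).2 rfl
  edist_comm := h_symm
  edist_triangle := h_triangle
  eq_of_edist_eq_zero := (h_eq _ _).1

theorem EMetricSpace.ofDist_completeSpace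
    (h_complete : ∀ s : ℕ → X,
      (∀ ε : ℝ≥0∞, 0 < ε → ∃ N : ℕ, ∀ m ≥ N, ∀ n ≥ N, d (s m) (s n) < ε) →
      ∃ l : X, Tendsto (fun n => d (s n) l) atTop (𝓝 0)) :
    letI := EMetricSpace.ofDist d h_eq h_symm h_triangle
    CompleteSpace X := by
  let := EMetricSpace.ofDist d h_eq h_symm h_triangle
  refine EMetric.complete_of_cauchySeq_tendsto fun u hu => ?_
  obtain ⟨l, hl⟩ := h_complete u (EMetric.cauchySeq_iff.1 hu)
  exact ⟨l, tendsto_iff_edist_tendsto_0.2 hl⟩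

end OfDist

/-- Diaz–Margolis fixed point theorem on a complete generalized metric space
(the distance may take the value `∞`). -/
theorem diaz_margolis {X : Type*} (d : X → X → ℝ≥0∞)
    (h_eq : ∀ x y, d x y = 0 ↔ x = y)
    (h_symm : ∀ x y, d x y = d y x)
    (h_triangle : ∀ x y z, d x z ≤ d x y + d y z)
    (h_complete : ∀ s : ℕ → X,
      (∀ ε : ℝ≥0∞, 0 < ε → ∃ N : ℕ, ∀ m ≥ N, ∀ n ≥ N, d (s m) (s n) < ε) →
      ∃ l : X, Tendsto (fun n => d (s n) l) atTop (𝓝 0))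
    (Ω : X → X) (L : NNReal) (hL : L < 1)
    (h_contr : ∀ x y, d (Ω x) (Ω y) ≤ (L : ℝ≥0∞) * d x y)
    (k : ℕ) (x : X) (h_fin : d (Ω^[k + 1] x) (Ω^[k] x) < ⊤) :
    ∃ xs : X,
      (Tendsto (fun n => d (Ω^[n] x) xs) atTop (𝓝 0)) ∧
      (Ω xs = xs) ∧
      (∀ y, d (Ω^[k] x) y < ⊤ → Ω y = y → y = xs) ∧
      (∀ y, d (Ω^[k] x) y < ⊤ →
        d y xs ≤ ((1 - L : NNReal) : ℝ≥0∞)⁻¹ * d (Ω y) y) := by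
  let := EMetricSpace.ofDist d h_eq h_symm h_triangle
  have := EMetricSpace.ofDist_completeSpace d h_eq h_symm h_triangle h_complete
  have hΩ : ContractingWith L Ω := ⟨hL, h_contr⟩
  have hstart : edist (Ω^[k] x) (Ω (Ω^[k] x)) ≠ ∞ := by
    rw [← Function.iterate_succ_apply' Ω k x]
    exact (h_symm _ _ ▸ h_fin).ne
  refine ⟨_, ?_, hΩ.efixedPoint_isFixedPt hstart,
    fun y hy hfy => hΩ.eq_efixedPoint_of_edist_ne_top hstart hy.ne hfy, fun y hy => ?_⟩
  · have h := hΩ.tendsto_iterate_efixedPoint hstart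
    simp only [← Function.iterate_add_apply] at h
    exact tendsto_iff_edist_tendsto_0.1 ((tendsto_add_atTop_iff_nat (f := (Ω^[·] x)) k).1 h)
  · calc d y _ ≤ d y (Ω y) / (1 - L) := hΩ.edist_efixedPoint_le_of_edist_ne_top hstart hy.ne
      _ = ((1 - L : NNReal) : ℝ≥0∞)⁻¹ * d (Ω y) y := by
        rw [ENNReal.coe_sub, ENNReal.coe_one, ENNReal.div_eq_inv_mul, h_symm]
end

section
/- Let Ψ : [a,∞) → ℝ be C¹, increasing with Ψ' ≠ 0, μ > 0, and let φ(t) = E_μ((Ψ(t)-Ψ(a))^μ) where E_μ is the Mittag-Leffler function. Then φ is increasing and satisfies (1/Γ(μ))∫_a^t Ψ'(s)(Ψ(t)-Ψ(s))^{μ-1}φ(s) ds ≤ φ(t) for all t ≥ a, i.e., condition (ẽ) of the Ulam–Hyers–Rassias framework holds with λ = 1. -/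
/-!
Both parts come from the power series of `E_μ`, whose coefficients are positive. Monotonicity
is then clear. For the integral inequality, the substitution `u = Ψ s` turns the left-hand side
into the Riemann–Liouville integral of order `μ` of `u ↦ E_μ((u - Ψ a) ^ μ)`. By the Beta
integral, this integral maps the `k`-th term `(u - b) ^ (μ k) / Γ(μ k + 1)` of the series to
the `(k + 1)`-st; integrating term by term, the left-hand side equals `E_μ((Ψ t - Ψ a) ^ μ) - 1`.
-/

open Set Real MeasureTheory

/-- The one-parameter Mittag-Leffler function `E_μ(z) = Σ_{k≥0} z^k / Γ(μk+1)`. -/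
noncomputable def mittagLeffler (μ z : ℝ) : ℝ :=
  ∑' k : ℕ, z ^ k / Real.Gamma (μ * k + 1)

open Filter

theorem Real.Gamma_add_one_mul_rpow_le_Gamma_add_one_add {x μ : ℝ} (hx : 0 < x) (hμ : 0 < μ) :
    Gamma (x + 1) * x ^ μ ≤ Gamma (x + 1 + μ) := by
  have hΓx := Gamma_pos_of_pos hx
  -- `log Γ` is convex and its slope on `[x, x + 1]` is `log x`
  have hslope := convexOn_log_Gamma.slope_mono_adjacent (mem_Ioi.mpr hx)
    (mem_Ioi.mpr (by linarith : 0 < x + 1 + μ)) (lt_add_one x) (by linarith : x + 1 < x + 1 + μ)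
  simp only [Function.comp_apply, add_sub_cancel_left, add_sub_cancel_right, div_one,
    Gamma_add_one hx.ne', log_mul hx.ne' hΓx.ne', le_div_iff₀ hμ] at hslope
  rw [← log_le_log_iff (by positivity) (Gamma_pos_of_pos (by linarith)),
    log_mul (by positivity) (by positivity), log_rpow hx, Gamma_add_one hx.ne',
    log_mul hx.ne' hΓx.ne']
  linarith

section MittagLeffler

variable {μ : ℝ}

lemma Gamma_mul_natCast_add_one_pos (hμ : 0 < μ) (k : ℕ) : 0 < Gamma (μ * k + 1) :=
  Gamma_pos_of_pos (by positivity)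

/-- Ratio test: the ratio of consecutive terms is at most `|z| / (μ k) ^ μ → 0`. -/
theorem summable_mittagLeffler (hμ : 0 < μ) (z : ℝ) :
    Summable fun k : ℕ => z ^ k / Gamma (μ * k + 1) := by
  refine summable_of_ratio_norm_eventually_le (r := 1 / 2) (by norm_num) ?_
  have hgrowth : Tendsto (fun k : ℕ => (μ * k) ^ μ) atTop atTop :=
    (tendsto_rpow_atTop hμ).comp (tendsto_natCast_atTop_atTop.const_mul_atTop hμ)
  filter_upwards [hgrowth.eventually_ge_atTop (2 * |z|), eventually_gt_atTop 0] with k hk hk0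
  have hμk : 0 < μ * k := by positivity
  have hΓ := Gamma_mul_natCast_add_one_pos hμ k
  have hΓ_succ : Gamma (μ * k + 1) * (μ * k) ^ μ ≤ Gamma (μ * ↑(k + 1) + 1) := by
    convert Gamma_add_one_mul_rpow_le_Gamma_add_one_add hμk hμ using 2
    push_cast; ring
  rw [norm_div, norm_div, norm_pow, norm_pow, norm_of_nonneg hΓ.le,
    norm_of_nonneg (Gamma_mul_natCast_add_one_pos hμ _).le, norm_eq_abs]
  calc |z| ^ (k + 1) / Gamma (μ * ↑(k + 1) + 1)
      ≤ |z| ^ (k + 1) / (Gamma (μ * k + 1) * (μ * k) ^ μ) := by gcongr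
    _ = |z| / (μ * k) ^ μ * (|z| ^ k / Gamma (μ * k + 1)) := by
        rw [pow_succ]; field_simp
    _ ≤ 1 / 2 * (|z| ^ k / Gamma (μ * k + 1)) := by
        gcongr ?_ * _
        rw [div_le_iff₀ (by positivity)]
        linarith

theorem mittagLeffler_zero (μ : ℝ) : mittagLeffler μ 0 = 1 := by
  rw [mittagLeffler, tsum_eq_single 0 fun k hk => by simp [hk]]
  simp

theorem mittagLeffler_eq_one_add (hμ : 0 < μ) (z : ℝ) :
    mittagLeffler μ z = 1 + ∑' k : ℕ, z ^ (k + 1) / Gamma (μ * ↑(k + 1) + 1) := by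
  rw [mittagLeffler, (summable_mittagLeffler hμ z).tsum_eq_zero_add]
  simp

theorem mittagLeffler_strictMonoOn (hμ : 0 < μ) : StrictMonoOn (mittagLeffler μ) (Ici 0) := by
  intro z hz w _ hzw
  exact (summable_mittagLeffler hμ z).tsum_lt_tsum (i := 1) (fun k => by gcongr) (by gcongr)
    (summable_mittagLeffler hμ w)

end MittagLeffler

section Beta

variable {p q : ℝ}

theorem integral_rpow_mul_one_sub_rpow (hp : 0 < p) (hq : 0 < q) :
    ∫ x in (0 : ℝ)..1, x ^ (p - 1) * (1 - x) ^ (q - 1) = Gamma p * Gamma q / Gamma (p + q) := by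
  have hbeta := Complex.Gamma_mul_Gamma_eq_betaIntegral (s := p) (t := q)
    (by simpa using hp) (by simpa using hq)
  have hreal : Complex.betaIntegral p q =
      ↑(∫ x in (0 : ℝ)..1, x ^ (p - 1) * (1 - x) ^ (q - 1)) := by
    rw [Complex.betaIntegral, ← intervalIntegral.integral_ofReal]
    refine intervalIntegral.integral_congr fun x hx => ?_
    rw [uIcc_of_le zero_le_one] at hx
    push_cast
    rw [Complex.ofReal_cpow hx.1, Complex.ofReal_cpow (sub_nonneg.mpr hx.2)]
    push_cast; rfl
  rw [hreal, ← Complex.ofReal_add, Complex.Gamma_ofReal, Complex.Gamma_ofReal,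
    Complex.Gamma_ofReal] at hbeta
  rw [eq_div_iff (Gamma_pos_of_pos (add_pos hp hq)).ne', mul_comm]
  exact_mod_cast hbeta.symm

variable {b c : ℝ}

theorem integral_sub_rpow_mul_sub_rpow (hp : 0 < p) (hq : 0 < q) (hbc : b < c) :
    ∫ u in b..c, (u - b) ^ (p - 1) * (c - u) ^ (q - 1) =
      (c - b) ^ (p + q - 1) * (Gamma p * Gamma q / Gamma (p + q)) := by
  have hL : 0 < c - b := sub_pos.mpr hbc
  have hsubst := intervalIntegral.integral_comp_add_mul (a := 0) (b := 1)
    (fun u => (u - b) ^ (p - 1) * (c - u) ^ (q - 1)) hL.ne' b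
  rw [mul_zero, add_zero, mul_one, add_sub_cancel, smul_eq_mul, eq_inv_mul_iff_mul_eq₀ hL.ne']
    at hsubst
  rw [← hsubst, ← integral_rpow_mul_one_sub_rpow hp hq, ← intervalIntegral.integral_const_mul,
    ← intervalIntegral.integral_const_mul]
  refine intervalIntegral.integral_congr fun x hx => ?_
  rw [uIcc_of_le zero_le_one] at hx
  rw [add_sub_cancel_left, show c - (b + (c - b) * x) = (c - b) * (1 - x) by ring,
    mul_rpow hL.le hx.1, mul_rpow hL.le (sub_nonneg.mpr hx.2),
    show p + q - 1 = (p - 1) + (q - 1) + 1 by ring, rpow_add hL, rpow_add hL, rpow_one]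
  ring

end Beta

section FractionalIntegral

variable {μ b c : ℝ}

theorem integral_sub_rpow_mul_mittagLeffler_term (hμ : 0 < μ) (hbc : b < c) (k : ℕ) :
    ∫ u in b..c, (c - u) ^ (μ - 1) * (((u - b) ^ μ) ^ k / Gamma (μ * k + 1)) =
      Gamma μ * (((c - b) ^ μ) ^ (k + 1) / Gamma (μ * ↑(k + 1) + 1)) := by
  have hp : 0 < μ * k + 1 := by positivity
  have hΓ := Gamma_mul_natCast_add_one_pos hμ k
  calc ∫ u in b..c, (c - u) ^ (μ - 1) * (((u - b) ^ μ) ^ k / Gamma (μ * k + 1))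
      = (∫ u in b..c, (u - b) ^ (μ * k + 1 - 1) * (c - u) ^ (μ - 1)) / Gamma (μ * k + 1) := by
        rw [← intervalIntegral.integral_div]
        refine intervalIntegral.integral_congr fun u hu => ?_
        rw [uIcc_of_le hbc.le] at hu
        rw [add_sub_cancel_right, ← rpow_natCast, ← rpow_mul (sub_nonneg.mpr hu.1)]
        ring
    _ = _ := by
        rw [integral_sub_rpow_mul_sub_rpow hp hμ hbc, ← rpow_natCast,
          ← rpow_mul (sub_pos.mpr hbc).le,
          show μ * k + 1 + μ - 1 = μ * ↑(k + 1) by push_cast; ring,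
          show μ * k + 1 + μ = μ * ↑(k + 1) + 1 by push_cast; ring]
        field_simp

theorem integral_sub_rpow_mul_mittagLeffler (hμ : 0 < μ) (hbc : b ≤ c) :
    ∫ u in b..c, (c - u) ^ (μ - 1) * mittagLeffler μ ((u - b) ^ μ) =
      Gamma μ * (mittagLeffler μ ((c - b) ^ μ) - 1) := by
  rcases hbc.eq_or_lt with rfl | hbc
  · simp [zero_rpow hμ.ne', mittagLeffler_zero]
  set F : ℕ → ℝ → ℝ := fun k u => (c - u) ^ (μ - 1) * (((u - b) ^ μ) ^ k / Gamma (μ * k + 1))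
  have hF_nonneg : ∀ k, ∀ u ∈ Ioc b c, 0 ≤ F k u := fun k u hu => by
    have := Gamma_mul_natCast_add_one_pos hμ k
    have : 0 ≤ u - b := by linarith [hu.1]
    have : 0 ≤ c - u := by linarith [hu.2]
    positivity
  have hF_int : ∀ k, IntegrableOn (F k) (Ioc b c) := fun k => by
    refine (intervalIntegral.intervalIntegrable_of_integral_ne_zero ?_).1
    rw [integral_sub_rpow_mul_mittagLeffler_term hμ hbc k]
    have := Gamma_pos_of_pos hμ
    have := Gamma_mul_natCast_add_one_pos hμ (k + 1)
    have := sub_pos.mpr hbc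
    positivity
  have hF_integral : ∀ k, ∫ u in Ioc b c, F k u =
      Gamma μ * (((c - b) ^ μ) ^ (k + 1) / Gamma (μ * ↑(k + 1) + 1)) := fun k => by
    rw [← integral_sub_rpow_mul_mittagLeffler_term hμ hbc k,
      intervalIntegral.integral_of_le hbc.le]
  have hF_norm : ∀ k, ∫ u in Ioc b c, ‖F k u‖ = ∫ u in Ioc b c, F k u := fun k =>
    setIntegral_congr_fun measurableSet_Ioc fun u hu => norm_of_nonneg (hF_nonneg k u hu)
  have hsum : Summable fun k => ∫ u in Ioc b c, F k u := by
    simpa only [hF_integral] using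
      ((summable_nat_add_iff 1).mpr (summable_mittagLeffler hμ ((c - b) ^ μ))).mul_left (Gamma μ)
  calc ∫ u in b..c, (c - u) ^ (μ - 1) * mittagLeffler μ ((u - b) ^ μ)
      = ∫ u in Ioc b c, ∑' k, F k u := by
        simp only [intervalIntegral.integral_of_le hbc.le, mittagLeffler, F, tsum_mul_left]
    _ = ∑' k, ∫ u in Ioc b c, F k u :=
        (integral_tsum_of_summable_integral_norm hF_int (by simpa only [hF_norm] using hsum)).symm
    _ = _ := by
        rw [funext hF_integral, tsum_mul_left, mittagLeffler_eq_one_add hμ, add_sub_cancel_left]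

end FractionalIntegral

theorem intervalIntegral.integral_deriv_mul_comp_of_monotoneOn {f f' : ℝ → ℝ} {a b : ℝ}
    (g : ℝ → ℝ) (hab : a ≤ b) (hf : ContinuousOn f (Icc a b))
    (hff' : ∀ x ∈ Ioo a b, HasDerivAt f (f' x) x) (hmono : MonotoneOn f (Icc a b)) :
    ∫ x in a..b, f' x * g (f x) = ∫ u in f a..f b, g u := by
  have hf' : ∀ x ∈ Ioo a b, 0 ≤ f' x := fun x hx => by
    rw [← ((hff' x hx).hasDerivWithinAt.derivWithin (isOpen_Ioo.uniqueDiffWithinAt hx))]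
    exact (hmono.mono Ioo_subset_Icc_self).derivWithin_nonneg
  rw [intervalIntegral.integral_of_le hab,
    intervalIntegral.integral_of_le (hmono (left_mem_Icc.mpr hab) (right_mem_Icc.mpr hab) hab),
    ← integral_Icc_eq_integral_Ioc, ← integral_Icc_eq_integral_Ioc]
  exact integral_Icc_deriv_smul_of_deriv_nonneg hf hff' hf' hab

theorem mittagLeffler_satisfies_lambda_condition_general (Ψ : ℝ → ℝ) (a μ : ℝ)
    (hΨC1 : ContDiffOn ℝ 1 Ψ (Ici a)) (hΨmono : StrictMonoOn Ψ (Ici a))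
    (hμ : 0 < μ) :
    StrictMonoOn (fun t => mittagLeffler μ ((Ψ t - Ψ a) ^ μ)) (Ici a) ∧
    ∀ t ∈ Ici a,
      (1 / Real.Gamma μ) *
          ∫ s in a..t, deriv Ψ s * (Ψ t - Ψ s) ^ (μ - 1) *
            mittagLeffler μ ((Ψ s - Ψ a) ^ μ) ≤
        mittagLeffler μ ((Ψ t - Ψ a) ^ μ) := by
  have hΨ_nonneg : ∀ t ∈ Ici a, 0 ≤ Ψ t - Ψ a := fun t ht =>
    sub_nonneg.mpr (hΨmono.monotoneOn self_mem_Ici ht (mem_Ici.mp ht))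
  refine ⟨(mittagLeffler_strictMonoOn hμ).comp (fun s hs t ht hst => ?_)
    (fun t ht => rpow_nonneg (hΨ_nonneg t ht) μ), fun t ht => ?_⟩
  · exact rpow_lt_rpow (hΨ_nonneg s hs) (sub_lt_sub_right (hΨmono hs ht hst) _) hμ
  have hΨ_deriv : ∀ s ∈ Ioo a t, HasDerivAt Ψ (deriv Ψ s) s := fun s hs =>
    ((hΨC1.contDiffAt (Ici_mem_nhds hs.1)).differentiableAt one_ne_zero).hasDerivAt
  have hsubst := intervalIntegral.integral_deriv_mul_comp_of_monotoneOn
    (fun u => (Ψ t - u) ^ (μ - 1) * mittagLeffler μ ((u - Ψ a) ^ μ)) ht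
    (hΨC1.continuousOn.mono Icc_subset_Ici_self) hΨ_deriv
    (hΨmono.monotoneOn.mono Icc_subset_Ici_self)
  simp only [← mul_assoc] at hsubst
  rw [hsubst, integral_sub_rpow_mul_mittagLeffler hμ (sub_nonneg.mp (hΨ_nonneg t ht)), one_div,
    inv_mul_cancel_left₀ (Gamma_pos_of_pos hμ).ne']
  linarith

/-- The function `φ(t) = E_μ((Ψ(t)-Ψ(a))^μ)` is increasing on `[a,∞)` and
satisfies condition (ẽ) of the Ulam–Hyers–Rassias framework with `λ = 1`:
`(1/Γ(μ)) ∫_a^t Ψ'(s)(Ψ(t)-Ψ(s))^{μ-1} φ(s) ds ≤ φ(t)` for `t ≥ a`. -/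
theorem mittagLeffler_satisfies_lambda_condition (Ψ : ℝ → ℝ) (a μ : ℝ)
    (hΨC1 : ContDiffOn ℝ 1 Ψ (Ici a)) (hΨmono : StrictMonoOn Ψ (Ici a))
    (hΨ' : ∀ t ∈ Ici a, deriv Ψ t ≠ 0) (hμ : 0 < μ) :
    StrictMonoOn (fun t => mittagLeffler μ ((Ψ t - Ψ a) ^ μ)) (Ici a) ∧
    ∀ t ∈ Ici a,
      (1 / Real.Gamma μ) *
          ∫ s in a..t, deriv Ψ s * (Ψ t - Ψ s) ^ (μ - 1) *
            mittagLeffler μ ((Ψ s - Ψ a) ^ μ) ≤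
        mittagLeffler μ ((Ψ t - Ψ a) ^ μ) :=
  mittagLeffler_satisfies_lambda_condition_general Ψ a μ hΨC1 hΨmono hμ
end

section
/- Let Ψ : [a,b] → ℝ be C¹, increasing with Ψ' ≠ 0, μ > 0, and a ≤ s < t ≤ b. Then for every constant g ≥ 0, the series Σ_{k=1}^∞ ((gΓ(μ))^k/Γ(μk)) (Ψ(t)-Ψ(s))^{kμ-1} converges, and ∫_a^t Ψ'(s) Σ_{k=1}^∞ ((gΓ(μ))^k/Γ(μk))(Ψ(t)-Ψ(s))^{kμ-1} ds = E_μ(gΓ(μ)(Ψ(t)-Ψ(a))^μ) - 1. -/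
/-!
The kernel integrates term by term: `Ψ'(s) (Ψ t - Ψ s)^(p-1)` is the derivative of
`-(Ψ t - Ψ s)^p / p`, so with `p = (k+1)μ` and `p Γ(p) = Γ(p+1)` the `k`-th term integrates to
`z^(k+1) / Γ(μ(k+1)+1)`, where `z = gΓ(μ)(Ψ t - Ψ a)^μ`. All terms are nonnegative, so sum and
integral may be exchanged, and what remains is the Mittag-Leffler series `E_μ(z)` without its
constant term. The series converge by the ratio test, because log-convexity of `Γ` gives
`Γ(y + μ) ≥ Γ(y) (y - 1)^μ`.
-/

open Set Real MeasureTheory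

open Filter Topology

theorem Real.Gamma_mul_rpow_le_Gamma_add {y μ : ℝ} (hy : 1 < y) (hμ : 0 < μ) :
    Gamma y * (y - 1) ^ μ ≤ Gamma (y + μ) := by
  have hy₁ : 0 < y - 1 := sub_pos.2 hy
  have hΓ : 0 < Gamma y := Gamma_pos_of_pos (by linarith)
  have hΓ₁ : 0 < Gamma (y - 1) := Gamma_pos_of_pos hy₁
  -- the slope of the convex `log ∘ Γ` on `[y, y + μ]` is at least its slope `log (y - 1)` on
  -- `[y - 1, y]`
  have hslope := convexOn_log_Gamma.slope_mono_adjacent (mem_Ioi.2 hy₁)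
    (mem_Ioi.2 (by linarith : 0 < y + μ)) (sub_one_lt y) (lt_add_of_pos_right y hμ)
  have hstep : log (Gamma y) - log (Gamma (y - 1)) = log (y - 1) := by
    have hrec : Gamma y = (y - 1) * Gamma (y - 1) := by simpa using Gamma_add_one hy₁.ne'
    rw [hrec, log_mul hy₁.ne' hΓ₁.ne', add_sub_cancel_right]
  simp only [Function.comp_apply, sub_sub_cancel, add_sub_cancel_left, div_one, hstep] at hslope
  calc Gamma y * (y - 1) ^ μ = exp (log (Gamma y) + μ * log (y - 1)) := by
        rw [exp_add, exp_log hΓ, rpow_def_of_pos hy₁, mul_comm μ]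
    _ ≤ exp (log (Gamma (y + μ))) := by
        gcongr
        rw [le_div_iff₀ hμ] at hslope
        linarith
    _ = Gamma (y + μ) := exp_log (Gamma_pos_of_pos (by linarith))

theorem Real.summable_pow_div_Gamma_mul_add {μ : ℝ} (hμ : 0 < μ) (b z : ℝ) :
    Summable fun k : ℕ => z ^ k / Gamma (μ * k + b) := by
  refine summable_of_ratio_norm_eventually_le (r := 1 / 2) (by norm_num) ?_
  have hlin : Tendsto (fun k : ℕ => μ * k + b) atTop atTop :=
    tendsto_atTop_add_const_right _ b (tendsto_natCast_atTop_atTop.const_mul_atTop hμ)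
  have hpow : Tendsto (fun k : ℕ => (μ * k + b - 1) ^ μ) atTop atTop :=
    (tendsto_rpow_atTop hμ).comp (tendsto_atTop_add_const_right _ (-1) hlin)
  filter_upwards [hlin.eventually_ge_atTop 2, hpow.eventually_ge_atTop (2 * ‖z‖)]
    with k hy hz
  set y := μ * k + b
  have hΓ : 0 < Gamma y := Gamma_pos_of_pos (by linarith)
  have hrpow : 0 < (y - 1) ^ μ := rpow_pos_of_pos (by linarith) μ
  have hΓle : Gamma y * (y - 1) ^ μ ≤ Gamma (μ * ↑(k + 1) + b) := by
    rw [show μ * ↑(k + 1) + b = y + μ by push_cast; ring]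
    exact Gamma_mul_rpow_le_Gamma_add (by linarith) hμ
  rw [norm_div, norm_div, norm_pow, norm_pow, norm_of_nonneg hΓ.le,
    norm_of_nonneg (mul_pos hΓ hrpow |>.le.trans hΓle), pow_succ]
  calc ‖z‖ ^ k * ‖z‖ / Gamma (μ * ↑(k + 1) + b)
      ≤ ‖z‖ ^ k * ‖z‖ / (Gamma y * (y - 1) ^ μ) := by gcongr
    _ = ‖z‖ / (y - 1) ^ μ * (‖z‖ ^ k / Gamma y) := by ring
    _ ≤ 1 / 2 * (‖z‖ ^ k / Gamma y) := by
        gcongr ?_ * _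
        rw [div_le_iff₀ hrpow]
        linarith

theorem hasSum_mittagLeffler_sub_one {μ : ℝ} (hμ : 0 < μ) (z : ℝ) :
    HasSum (fun k : ℕ => z ^ (k + 1) / Gamma (μ * (k + 1) + 1)) (mittagLeffler μ z - 1) := by
  simpa [mittagLeffler] using
    (hasSum_nat_add_iff' 1).2 (summable_pow_div_Gamma_mul_add hμ 1 z).hasSum

/-- Index `k` is the paper's `k + 1`. -/
noncomputable def gronwallKernelTerm (q μ x : ℝ) (k : ℕ) : ℝ :=
  q ^ (k + 1) / Gamma (μ * (k + 1)) * x ^ ((k + 1 : ℕ) * μ - 1)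

theorem mul_gronwallKernelTerm (q μ x y : ℝ) (k : ℕ) :
    y * gronwallKernelTerm q μ x k =
      q ^ (k + 1) / Gamma (μ * (k + 1)) * (y * x ^ ((k + 1 : ℕ) * μ - 1)) := by
  rw [gronwallKernelTerm]
  ring

theorem gronwallKernelTerm_eq_mul {μ x : ℝ} (q : ℝ) (hx : 0 < x) (k : ℕ) :
    gronwallKernelTerm q μ x k = q * x ^ (μ - 1) * ((q * x ^ μ) ^ k / Gamma (μ * k + μ)) := by
  have hexp : ((k + 1 : ℕ) : ℝ) * μ - 1 = μ * k + (μ - 1) := by push_cast; ring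
  rw [gronwallKernelTerm, hexp, rpow_add hx, rpow_mul hx.le, rpow_natCast, mul_add_one, mul_pow,
    pow_succ]
  ring

theorem summable_gronwallKernelTerm {μ x : ℝ} (q : ℝ) (hμ : 0 < μ) (hx : 0 < x) :
    Summable (gronwallKernelTerm q μ x) :=
  ((summable_pow_div_Gamma_mul_add hμ μ (q * x ^ μ)).mul_left (q * x ^ (μ - 1))).congr
    fun k => (gronwallKernelTerm_eq_mul q hx k).symm

theorem HasDerivAt.neg_rpow_const_sub_div {f : ℝ → ℝ} {f' x c p : ℝ} (hf : HasDerivAt f f' x)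
    (hx : f x ≠ c) (hp : p ≠ 0) :
    HasDerivAt (fun s => -(c - f s) ^ p / p) (f' * (c - f x) ^ (p - 1)) x := by
  refine (((hf.const_sub c).rpow_const (p := p) (Or.inl (sub_ne_zero.2 hx.symm))).neg.div_const
    p).congr_deriv ?_
  field_simp

theorem MonotoneOn.deriv_nonneg_of_mem_nhds {f : ℝ → ℝ} {s : Set ℝ} {x : ℝ} (hf : MonotoneOn f s)
    (hs : s ∈ 𝓝 x) : 0 ≤ deriv f x := by
  rw [← derivWithin_of_mem_nhds hs]
  exact hf.derivWithin_nonneg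

section RpowKernel

variable {Ψ : ℝ → ℝ} {a t p : ℝ}

theorem hasDerivAt_neg_rpow_sub_div (hp : 0 < p) (hΨd : ∀ x ∈ Ioo a t, DifferentiableAt ℝ Ψ x)
    (hΨm : StrictMonoOn Ψ (Icc a t)) {x : ℝ} (hx : x ∈ Ioo a t) :
    HasDerivAt (fun s => -(Ψ t - Ψ s) ^ p / p) (deriv Ψ x * (Ψ t - Ψ x) ^ (p - 1)) x :=
  (hΨd x hx).hasDerivAt.neg_rpow_const_sub_div
    (hΨm (Ioo_subset_Icc_self hx) (right_mem_Icc.2 (hx.1.trans hx.2).le) hx.2).ne hp.ne'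

theorem continuousOn_neg_rpow_sub_div (hp : 0 < p) (hΨc : ContinuousOn Ψ (Icc a t)) :
    ContinuousOn (fun s => -(Ψ t - Ψ s) ^ p / p) (Icc a t) :=
  ((continuousOn_const.sub hΨc).rpow_const fun _ _ => Or.inr hp.le).neg.div_const p

theorem deriv_mul_rpow_sub_nonneg (hΨm : MonotoneOn Ψ (Icc a t)) {x : ℝ} (hx : x ∈ Ioo a t) :
    0 ≤ deriv Ψ x * (Ψ t - Ψ x) ^ (p - 1) :=
  mul_nonneg (hΨm.deriv_nonneg_of_mem_nhds (Icc_mem_nhds hx.1 hx.2)) (rpow_nonneg (sub_nonneg.2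
    (hΨm (Ioo_subset_Icc_self hx) (right_mem_Icc.2 (hx.1.trans hx.2).le) hx.2.le)) _)

theorem integrableOn_deriv_mul_rpow_sub (hp : 0 < p) (hΨc : ContinuousOn Ψ (Icc a t))
    (hΨd : ∀ x ∈ Ioo a t, DifferentiableAt ℝ Ψ x) (hΨm : StrictMonoOn Ψ (Icc a t)) :
    IntegrableOn (fun s => deriv Ψ s * (Ψ t - Ψ s) ^ (p - 1)) (Ioc a t) :=
  intervalIntegral.integrableOn_deriv_of_nonneg (continuousOn_neg_rpow_sub_div hp hΨc)
    (fun _ hx => hasDerivAt_neg_rpow_sub_div hp hΨd hΨm hx)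
    (fun _ hx => deriv_mul_rpow_sub_nonneg hΨm.monotoneOn hx)

theorem integral_deriv_mul_rpow_sub (hat : a ≤ t) (hp : 0 < p) (hΨc : ContinuousOn Ψ (Icc a t))
    (hΨd : ∀ x ∈ Ioo a t, DifferentiableAt ℝ Ψ x) (hΨm : StrictMonoOn Ψ (Icc a t)) :
    ∫ s in a..t, deriv Ψ s * (Ψ t - Ψ s) ^ (p - 1) = (Ψ t - Ψ a) ^ p / p := by
  rw [intervalIntegral.integral_eq_sub_of_hasDeriv_right_of_le hat
    (continuousOn_neg_rpow_sub_div hp hΨc)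
    (fun _ hx => (hasDerivAt_neg_rpow_sub_div hp hΨd hΨm hx).hasDerivWithinAt)
    ((intervalIntegrable_iff_integrableOn_Ioc_of_le hat).2
      (integrableOn_deriv_mul_rpow_sub hp hΨc hΨd hΨm))]
  simp only [sub_self, zero_rpow hp.ne', neg_zero, zero_div, zero_sub]
  ring

end RpowKernel

theorem MeasureTheory.integral_tsum_of_nonneg {α : Type*} [MeasurableSpace α] {μ : Measure α}
    {F : ℕ → α → ℝ} (hint : ∀ i, Integrable (F i) μ) (hnonneg : ∀ i, 0 ≤ᵐ[μ] F i)
    (hsum : Summable fun i => ∫ x, F i x ∂μ) :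
    ∫ x, ∑' i, F i x ∂μ = ∑' i, ∫ x, F i x ∂μ := by
  refine (integral_tsum_of_summable_integral_norm hint (hsum.congr fun i => ?_)).symm
  exact integral_congr_ae ((hnonneg i).mono fun x hx => (norm_of_nonneg hx).symm)

theorem intervalIntegral.integral_tsum_of_nonneg {a b : ℝ} (hab : a ≤ b) {F : ℕ → ℝ → ℝ}
    (hint : ∀ i, IntervalIntegrable (F i) volume a b) (hnonneg : ∀ i, ∀ x ∈ Ioo a b, 0 ≤ F i x)
    (hsum : Summable fun i => ∫ x in a..b, F i x) :
    ∫ x in a..b, ∑' i, F i x = ∑' i, ∫ x in a..b, F i x := by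
  have hIoo (f : ℝ → ℝ) : ∫ x in a..b, f x = ∫ x in Ioo a b, f x := by
    rw [intervalIntegral.integral_of_le hab, integral_Ioc_eq_integral_Ioo]
  simp only [hIoo] at hsum ⊢
  exact MeasureTheory.integral_tsum_of_nonneg (fun i => (hint i).1.mono_set Ioo_subset_Ioc_self)
    (fun i => ae_restrict_of_forall_mem measurableSet_Ioo (hnonneg i)) hsum

section GronwallKernel

variable {Ψ : ℝ → ℝ} {a t μ : ℝ}

theorem integral_deriv_mul_gronwallKernelTerm (q : ℝ) (hμ : 0 < μ) (hat : a ≤ t)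
    (hΨc : ContinuousOn Ψ (Icc a t)) (hΨd : ∀ x ∈ Ioo a t, DifferentiableAt ℝ Ψ x)
    (hΨm : StrictMonoOn Ψ (Icc a t)) (k : ℕ) :
    IntervalIntegrable (fun s => deriv Ψ s * gronwallKernelTerm q μ (Ψ t - Ψ s) k) volume a t ∧
    ∫ s in a..t, deriv Ψ s * gronwallKernelTerm q μ (Ψ t - Ψ s) k =
      (q * (Ψ t - Ψ a) ^ μ) ^ (k + 1) / Gamma (μ * (k + 1) + 1) := by
  have hp : 0 < ((k + 1 : ℕ) : ℝ) * μ := by positivity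
  have hΓ : Gamma (μ * (k + 1)) ≠ 0 := (Gamma_pos_of_pos (by positivity)).ne'
  have hX : 0 ≤ Ψ t - Ψ a := sub_nonneg.2 (hΨm.monotoneOn (left_mem_Icc.2 hat)
    (right_mem_Icc.2 hat) hat)
  simp only [mul_gronwallKernelTerm]
  rw [intervalIntegral.integral_const_mul, integral_deriv_mul_rpow_sub hat hp hΨc hΨd hΨm]
  refine ⟨((intervalIntegrable_iff_integrableOn_Ioc_of_le hat).2
    (integrableOn_deriv_mul_rpow_sub hp hΨc hΨd hΨm)).const_mul _, ?_⟩
  rw [mul_comm _ μ, rpow_mul hX, rpow_natCast, Gamma_add_one (by positivity), mul_pow]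
  push_cast
  field_simp

theorem integral_deriv_mul_tsum_gronwallKernelTerm {q : ℝ} (hq : 0 ≤ q) (hμ : 0 < μ)
    (hat : a ≤ t) (hΨc : ContinuousOn Ψ (Icc a t)) (hΨd : ∀ x ∈ Ioo a t, DifferentiableAt ℝ Ψ x)
    (hΨm : StrictMonoOn Ψ (Icc a t)) :
    ∫ s in a..t, deriv Ψ s * ∑' k, gronwallKernelTerm q μ (Ψ t - Ψ s) k =
      mittagLeffler μ (q * (Ψ t - Ψ a) ^ μ) - 1 := by
  have hterm := integral_deriv_mul_gronwallKernelTerm q hμ hat hΨc hΨd hΨm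
  have hML := hasSum_mittagLeffler_sub_one hμ (q * (Ψ t - Ψ a) ^ μ)
  simp_rw [← tsum_mul_left]
  rw [intervalIntegral.integral_tsum_of_nonneg hat (fun k => (hterm k).1) ?_ ?_]
  · simpa only [(hterm _).2] using hML.tsum_eq
  · intro k s hs
    rw [mul_gronwallKernelTerm]
    exact mul_nonneg (div_nonneg (pow_nonneg hq _) (Gamma_pos_of_pos (by positivity)).le)
      (deriv_mul_rpow_sub_nonneg hΨm.monotoneOn hs)
  · simpa only [(hterm _).2] using hML.summable

end GronwallKernel

theorem gronwall_series_integral_general (Ψ : ℝ → ℝ) (a b μ g : ℝ)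
    (hΨC1 : ContDiffOn ℝ 1 Ψ (Icc a b)) (hΨmono : StrictMonoOn Ψ (Icc a b))
    (hμ : 0 < μ) (hg : 0 ≤ g) :
    ∀ t ∈ Ioc a b,
      (∀ s ∈ Ico a t, Summable (fun k : ℕ =>
        ((g * Real.Gamma μ) ^ (k + 1) / Real.Gamma (μ * (k + 1))) *
          (Ψ t - Ψ s) ^ ((k + 1 : ℕ) * μ - 1))) ∧
      ∫ s in a..t, deriv Ψ s *
          ∑' k : ℕ, ((g * Real.Gamma μ) ^ (k + 1) / Real.Gamma (μ * (k + 1))) *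
            (Ψ t - Ψ s) ^ ((k + 1 : ℕ) * μ - 1) =
        mittagLeffler μ (g * Real.Gamma μ * (Ψ t - Ψ a) ^ μ) - 1 := by
  rintro t ⟨hat, htb⟩
  have hsub : Icc a t ⊆ Icc a b := Icc_subset_Icc_right htb
  have hΨm : StrictMonoOn Ψ (Icc a t) := hΨmono.mono hsub
  have hΨd (x : ℝ) (hx : x ∈ Ioo a t) : DifferentiableAt ℝ Ψ x :=
    (hΨC1.differentiableOn one_ne_zero x (hsub (Ioo_subset_Icc_self hx))).differentiableAt
      (Icc_mem_nhds hx.1 (hx.2.trans_le htb))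
  refine ⟨fun s hs => summable_gronwallKernelTerm _ hμ (sub_pos.2 (hΨm ⟨hs.1, hs.2.le⟩
    (right_mem_Icc.2 hat.le) hs.2)), ?_⟩
  exact integral_deriv_mul_tsum_gronwallKernelTerm (mul_nonneg hg (Gamma_pos_of_pos hμ).le) hμ
    hat.le (hΨC1.continuousOn.mono hsub) hΨd hΨm

/-- The Gronwall series kernel `Σ_{k≥1} ((gΓ(μ))^k/Γ(μk)) (Ψ(t)-Ψ(s))^{kμ-1}`
converges for `a ≤ s < t`, and its integral against `Ψ'` over `(a,t)` equals
`E_μ(gΓ(μ)(Ψ(t)-Ψ(a))^μ) - 1`. -/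
theorem gronwall_series_integral (Ψ : ℝ → ℝ) (a b μ g : ℝ) (hab : a < b)
    (hΨC1 : ContDiffOn ℝ 1 Ψ (Icc a b)) (hΨmono : StrictMonoOn Ψ (Icc a b))
    (hΨ' : ∀ t ∈ Icc a b, deriv Ψ t ≠ 0) (hμ : 0 < μ) (hg : 0 ≤ g) :
    ∀ t ∈ Ioc a b,
      (∀ s ∈ Ico a t, Summable (fun k : ℕ =>
        ((g * Real.Gamma μ) ^ (k + 1) / Real.Gamma (μ * (k + 1))) *
          (Ψ t - Ψ s) ^ ((k + 1 : ℕ) * μ - 1))) ∧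
      ∫ s in a..t, deriv Ψ s *
          ∑' k : ℕ, ((g * Real.Gamma μ) ^ (k + 1) / Real.Gamma (μ * (k + 1))) *
            (Ψ t - Ψ s) ^ ((k + 1 : ℕ) * μ - 1) =
        mittagLeffler μ (g * Real.Gamma μ * (Ψ t - Ψ a) ^ μ) - 1 :=
  gronwall_series_integral_general Ψ a b μ g hΨC1 hΨmono hμ hg
end
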